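/- For the explicit two-ray graph of Example 5 with m ≡ 1, the Cheeger constant equals 1: h(V) = inf_n 2(n+1)/(2n+1) = 1, and consequently Re⟨Δf,f⟩ ≥ 1/6 for every unit vector f ∈ C_c(V). -/

import Mathlib

open scoped ComplexConjugate
noncomputable section

variable {V : Type*}

/-- The (non-symmetric) weighted graph Laplacian `Δf(x) = (1/m(x)) Σ_y b(x,y)(f(x)-f(y))`. -/
def lapOp (m : V → ℝ) (b : V → V → ℝ) (f : V → ℂ) (x : V) : ℂ :=
  (1 / (m x : ℂ)) * ∑' y, (b x y : ℂ) * (f x - f y)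

/-- The skew-symmetric part `B = (Δ - Δ')/2`. -/
def skewOp (m : V → ℝ) (b : V → V → ℝ) (f : V → ℂ) (x : V) : ℂ :=
  (1 / (m x : ℂ)) * ∑' y, (((b x y - b y x) / 2 : ℝ) : ℂ) * (f x - f y)

/-- The symmetrized weight `b'(x,y) = (b(x,y)+b(y,x))/2`. -/
def bsym (b : V → V → ℝ) (x y : V) : ℝ := (b x y + b y x) / 2

/-- The `ℓ²(V,m)` inner product `⟨f,g⟩ = Σ_x m(x) f(x) conj(g(x))`. -/
def gip (m : V → ℝ) (f g : V → ℂ) : ℂ := ∑' x, (m x : ℂ) * f x * conj (g x)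

/-- The squared `ℓ²(V,m)` norm. -/
def l2normSq (m : V → ℝ) (f : V → ℂ) : ℝ := ∑' x, m x * ‖f x‖ ^ 2

/-- Finitely supported functions (the domain `C_c(V)`). -/
def FinSupp (f : V → ℂ) : Prop := (Function.support f).Finite

/-- Local finiteness of the graph. -/
def LocFinGraph (b : V → V → ℝ) : Prop := ∀ x : V, {y | b x y ≠ 0 ∨ b y x ≠ 0}.Finite

/-- Kirchhoff's assumption (β): at each vertex the incoming and outgoing conductances agree. -/
def Kirchhoff (b : V → V → ℝ) : Prop := ∀ x : V, ∑' y, b x y = ∑' y, b y x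

/-- Weak connectedness of the graph. -/
def WeaklyConnected (b : V → V → ℝ) : Prop :=
  ∀ x y : V, Relation.ReflTransGen (fun u v => b u v ≠ 0 ∨ b v u ≠ 0) x y

/-- Membership in `ℓ²(V,m)`. -/
def MemL2 (m : V → ℝ) (f : V → ℂ) : Prop := Summable fun x => m x * ‖f x‖ ^ 2

/-- m-accretiveness of the closure of the operator `T` defined on `C_c(V) ⊆ ℓ²(V,m)`:
for every `λ` with `Re λ > 0`, the a-priori bound `Re(λ)‖f‖ ≤ ‖(T+λ)f‖` holds on `C_c(V)`
and the range of `T + λ` on `C_c(V)` is dense in `ℓ²(V,m)`.  (For an accretive operator this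
is equivalent to: the left open half-plane lies in the resolvent set of the closure of `T`
and `‖(closure T + λ)⁻¹‖ ≤ 1/Re(λ)`.) -/
def IsMAccretiveClosure (m : V → ℝ) (T : (V → ℂ) → V → ℂ) : Prop :=
  ∀ l : ℂ, 0 < l.re →
    (∀ f : V → ℂ, FinSupp f →
      l.re ^ 2 * l2normSq m f ≤ l2normSq m (fun x => T f x + l * f x)) ∧
    ∀ v : V → ℂ, MemL2 m v → ∀ ε : ℝ, 0 < ε →
      ∃ f : V → ℂ, FinSupp f ∧ l2normSq m (fun x => T f x + l * f x - v x) < ε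

/-- Essential self-adjointness of a symmetric operator `T` defined on `C_c(V) ⊆ ℓ²(V,m)`,
phrased as density of the ranges of `T + i` and `T - i`. -/
def EssSelfAdjointOn (m : V → ℝ) (T : (V → ℂ) → V → ℂ) : Prop :=
  ∀ l : ℂ, l = Complex.I ∨ l = -Complex.I →
    ∀ v : V → ℂ, MemL2 m v → ∀ ε : ℝ, 0 < ε →
      ∃ f : V → ℂ, FinSupp f ∧ l2normSq m (fun x => T f x + l * f x - v x) < ε

/-- χ-completeness of the weighted graph `(V,m,c)` (with symmetric weight `c`). -/
def ChiComplete (m : V → ℝ) (c : V → V → ℝ) : Prop :=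
  ∃ (Bn : ℕ → Set V) (χ : ℕ → V → ℝ) (C : ℝ), 0 < C ∧
    Monotone Bn ∧ (∀ n, (Bn n).Finite) ∧ (⋃ n, Bn n) = Set.univ ∧
    (∀ n, (Function.support (χ n)).Finite) ∧
    (∀ n x, 0 ≤ χ n x ∧ χ n x ≤ 1) ∧
    (∀ n x, x ∈ Bn n → χ n x = 1) ∧
    (∀ n x, (1 / m x) * ∑' y, c x y * |χ n x - χ n y| ^ 2 ≤ C)

/-- The asymmetry condition (hypothesis \eqref{thm-chi}):
`(1/m(x)) Σ_y |b(x,y) - b(y,x)|²/b'(x,y) ≤ C` for all `x`. -/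
def AsymCond (m : V → ℝ) (b : V → V → ℝ) (C : ℝ) : Prop :=
  ∀ x : V, (1 / m x) * ∑' y, |b x y - b y x| ^ 2 / bsym b x y ≤ C

open Classical in
/-- Dodziuk's Cheeger constant of the symmetric weighted graph `(V, 1, c)`. -/
def cheeger (c : V → V → ℝ) : ℝ :=
  ⨅ U : {U : Finset V // U.Nonempty},
    (∑ x ∈ U.1, ∑' y : V, if y ∉ U.1 then Real.sqrt (c x y) else 0) / (U.1.card : ℝ)

/-- The vertex set of the two-ray graph of Example 5: the origin `o = x₀`, and `X n`, `Y n`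
representing the vertices `x_{n+1}`, `y_{n+1}` (`n ∈ ℕ`). -/
inductive Vtx where
  | o : Vtx
  | X : ℕ → Vtx
  | Y : ℕ → Vtx
deriving DecidableEq

/-- The edge weights of the two-ray graph of Example 5 (with parameter `k ≥ 0`):
`b(x₀,x₁) = b(y₁,x₀) = k+2`, `b(x₀,y₁) = b(x₁,x₀) = k`, and for `n ≥ 1`:
`b(x_n,x_{n+1}) = (n+1)²+(n+1)`, `b(x_{n+1},x_n) = (n+1)²-(n+1)`,
`b(y_n,y_{n+1}) = (n+1)²-(n+1)`, `b(y_{n+1},y_n) = (n+1)²+(n+1)`,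
`b(x_n,y_n) = n-1`, `b(y_n,x_n) = n+1`  (recall `X m = x_{m+1}`, `Y m = y_{m+1}`). -/
def ebW (k : ℝ) : Vtx → Vtx → ℝ
  | .o, .X 0 => k + 2
  | .X 0, .o => k
  | .o, .Y 0 => k
  | .Y 0, .o => k + 2
  | .X m, .X n =>
      if n = m + 1 then ((m : ℝ) + 2) ^ 2 + ((m : ℝ) + 2)
      else if m = n + 1 then ((n : ℝ) + 2) ^ 2 - ((n : ℝ) + 2) else 0
  | .Y m, .Y n =>
      if n = m + 1 then ((m : ℝ) + 2) ^ 2 - ((m : ℝ) + 2)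
      else if m = n + 1 then ((n : ℝ) + 2) ^ 2 + ((n : ℝ) + 2) else 0
  | .X m, .Y n => if m = n then (m : ℝ) else 0
  | .Y m, .X n => if m = n then (m : ℝ) + 2 else 0
  | _, _ => 0

namespace Stmt18Aux
variable (k : ℝ)
lemma ebW_XX (m n : ℕ) : ebW k (.X m) (.X n) =
    if n = m + 1 then ((m : ℝ) + 2) ^ 2 + ((m : ℝ) + 2)
    else if m = n + 1 then ((n : ℝ) + 2) ^ 2 - ((n : ℝ) + 2) else 0 := by
  cases m <;> cases n <;> rfl
lemma ebW_YY (m n : ℕ) : ebW k (.Y m) (.Y n) =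
    if n = m + 1 then ((m : ℝ) + 2) ^ 2 - ((m : ℝ) + 2)
    else if m = n + 1 then ((n : ℝ) + 2) ^ 2 + ((n : ℝ) + 2) else 0 := by
  cases m <;> cases n <;> rfl
lemma ebW_XY (m n : ℕ) : ebW k (.X m) (.Y n) = if m = n then (m : ℝ) else 0 := by
  cases m <;> cases n <;> rfl
lemma ebW_YX (m n : ℕ) : ebW k (.Y m) (.X n) = if m = n then (m : ℝ) + 2 else 0 := by
  cases m <;> cases n <;> rfl
lemma ebW_oX (n : ℕ) : ebW k .o (.X n) = if n = 0 then k + 2 else 0 := by cases n <;> rfl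
lemma ebW_Xo (n : ℕ) : ebW k (.X n) .o = if n = 0 then k else 0 := by cases n <;> rfl
lemma ebW_oY (n : ℕ) : ebW k .o (.Y n) = if n = 0 then k else 0 := by cases n <;> rfl
lemma ebW_Yo (n : ℕ) : ebW k (.Y n) .o = if n = 0 then k + 2 else 0 := by cases n <;> rfl
lemma ebW_oo : ebW k .o .o = 0 := rfl

def nbr : Vtx → Finset Vtx
  | .o => {.X 0, .Y 0}
  | .X 0 => {.o, .X 1, .Y 0}
  | .X (m+1) => {.X m, .X (m+2), .Y (m+1)}
  | .Y 0 => {.o, .Y 1, .X 0}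
  | .Y (m+1) => {.Y m, .Y (m+2), .X (m+1)}

set_option maxHeartbeats 1000000 in
lemma ebW_eq_zero {x y : Vtx} (h : y ∉ nbr x) : ebW k x y = 0 ∧ ebW k y x = 0 := by
  rcases x with _ | m | m <;> rcases y with _ | n | n <;>
    [skip; skip; skip; rcases m with _ | m; rcases m with _ | m; rcases m with _ | m;
     rcases m with _ | m; rcases m with _ | m; rcases m with _ | m] <;>
  simp [nbr] at h <;>
  simp_all [ebW_XX, ebW_YY, ebW_XY, ebW_YX, ebW_oX, ebW_Xo, ebW_oY, ebW_Yo, ebW_oo] <;>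
  first
    | (constructor <;> (intro hh; omega))
    | (intro hh; omega)


lemma cW_symm (x y : Vtx) : bsym (ebW k) x y = bsym (ebW k) y x := by
  unfold bsym; ring

lemma cW_XX (m n : ℕ) : bsym (ebW k) (.X m) (.X n) =
    if n = m + 1 then ((m : ℝ) + 2) ^ 2 else if m = n + 1 then ((n : ℝ) + 2) ^ 2 else 0 := by
  unfold bsym; rw [ebW_XX, ebW_XX]; split_ifs <;> (try subst_vars) <;> first | ring1 | (exfalso; omega)

lemma cW_YY (m n : ℕ) : bsym (ebW k) (.Y m) (.Y n) =
    if n = m + 1 then ((m : ℝ) + 2) ^ 2 else if m = n + 1 then ((n : ℝ) + 2) ^ 2 else 0 := by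
  unfold bsym; rw [ebW_YY, ebW_YY]; split_ifs <;> (try subst_vars) <;> first | ring1 | (exfalso; omega)

lemma cW_XY (m n : ℕ) : bsym (ebW k) (.X m) (.Y n) = if m = n then (m : ℝ) + 1 else 0 := by
  unfold bsym; rw [ebW_XY, ebW_YX]; split_ifs <;> (try subst_vars) <;> first | ring1 | (exfalso; omega)

lemma cW_YX (m n : ℕ) : bsym (ebW k) (.Y m) (.X n) = if m = n then (m : ℝ) + 1 else 0 := by
  unfold bsym; rw [ebW_YX, ebW_XY]; split_ifs <;> (try subst_vars) <;> first | ring1 | (exfalso; omega)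

lemma cW_oX (n : ℕ) : bsym (ebW k) .o (.X n) = if n = 0 then k + 1 else 0 := by
  unfold bsym; rw [ebW_oX, ebW_Xo]; split_ifs <;> ring

lemma cW_Xo (n : ℕ) : bsym (ebW k) (.X n) .o = if n = 0 then k + 1 else 0 := by
  unfold bsym; rw [ebW_oX, ebW_Xo]; split_ifs <;> ring

lemma cW_oY (n : ℕ) : bsym (ebW k) .o (.Y n) = if n = 0 then k + 1 else 0 := by
  unfold bsym; rw [ebW_oY, ebW_Yo]; split_ifs <;> ring

lemma cW_Yo (n : ℕ) : bsym (ebW k) (.Y n) .o = if n = 0 then k + 1 else 0 := by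
  unfold bsym; rw [ebW_oY, ebW_Yo]; split_ifs <;> ring

lemma cW_oo : bsym (ebW k) .o .o = 0 := by unfold bsym; rw [ebW_oo]; ring

lemma cW_zero {x y : Vtx} (h : y ∉ nbr x) : bsym (ebW k) x y = 0 := by
  obtain ⟨h1, h2⟩ := ebW_eq_zero k h
  unfold bsym; rw [h1, h2]; ring

lemma cW_nonneg (hk : 0 ≤ k) (x y : Vtx) : 0 ≤ bsym (ebW k) x y := by
  rcases x with _ | m | m <;> rcases y with _ | n | n <;>
    simp only [cW_XX, cW_YY, cW_XY, cW_YX, cW_oX, cW_Xo, cW_oY, cW_Yo, cW_oo] <;>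
    (try split_ifs) <;> first | positivity | linarith

/-! ### Balls -/

def ballF (n : ℕ) : Finset Vtx :=
  {Vtx.o} ∪ (Finset.range n).image Vtx.X ∪ (Finset.range n).image Vtx.Y

@[simp] lemma o_mem_ballF (n : ℕ) : Vtx.o ∈ ballF n := by simp [ballF]

@[simp] lemma X_mem_ballF {m n : ℕ} : Vtx.X m ∈ ballF n ↔ m < n := by simp [ballF]

@[simp] lemma Y_mem_ballF {m n : ℕ} : Vtx.Y m ∈ ballF n ↔ m < n := by simp [ballF]

lemma X_inj : Function.Injective Vtx.X := fun a b h => by injection h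
lemma Y_inj : Function.Injective Vtx.Y := fun a b h => by injection h

lemma card_ballF (n : ℕ) : (ballF n).card = 2 * n + 1 := by
  rw [ballF,
    Finset.card_union_of_disjoint (by simp [Finset.disjoint_left]),
    Finset.card_union_of_disjoint (by simp [Finset.disjoint_left]),
    Finset.card_image_of_injective _ Y_inj, Finset.card_image_of_injective _ X_inj,
    Finset.card_singleton, Finset.card_range]
  ring

lemma ballF_nonempty (n : ℕ) : (ballF n).Nonempty := ⟨.o, o_mem_ballF n⟩

lemma nbr_subset_ballF {x : Vtx} {n : ℕ} (hx : x ∈ ballF n) : nbr x ⊆ ballF (n + 1) := by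
  rcases x with _ | m | m <;>
    [skip; rcases m with _ | m; rcases m with _ | m] <;>
    simp_all [nbr, Finset.insert_subset_iff] <;> omega

/-! ### The limit lemma and Part 1 -/

lemma le_one_of_le_seq (x : ℝ) (h : ∀ n : ℕ, x ≤ 2*((n:ℝ)+2)/(2*(n:ℝ)+3)) : x ≤ 1 := by
  refine le_of_forall_pos_le_add ?_
  intro ε hε
  obtain ⟨n, hn⟩ := exists_nat_one_div_lt hε
  refine (h n).trans ?_
  rw [div_le_iff₀ (by positivity)]
  have h1 : 1/((n:ℝ)+1) < ε := hn
  have h2 : (0:ℝ) < (n:ℝ)+1 := by positivity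
  rw [div_lt_iff₀ h2] at h1
  nlinarith [hε.le, (Nat.cast_nonneg n : (0:ℝ) ≤ n)]

lemma seq_bddBelow : BddBelow (Set.range fun n : ℕ => 2 * ((n : ℝ) + 1) / (2 * (n : ℝ) + 1)) := by
  refine ⟨0, fun y hy => ?_⟩
  obtain ⟨n, rfl⟩ := hy
  positivity

lemma part1 : (⨅ n : ℕ, 2 * ((n : ℝ) + 1) / (2 * (n : ℝ) + 1)) = 1 := by
  refine le_antisymm ?_ ?_
  · refine le_one_of_le_seq _ fun n => ?_
    have := ciInf_le seq_bddBelow (n+1)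
    refine this.trans ?_
    push_cast
    rw [div_le_div_iff₀ (by positivity) (by positivity)]
    ring_nf
    nlinarith [(Nat.cast_nonneg n : (0:ℝ) ≤ n)]
  · refine le_ciInf fun n => ?_
    rw [le_div_iff₀ (by positivity)]
    nlinarith [(Nat.cast_nonneg n : (0:ℝ) ≤ n)]

/-! ### General double-sum identities -/

lemma re_sum2 {W : Type*} (G : Finset W) (b : W → W → ℝ) (f : W → ℂ) :
    (∑ x ∈ G, ∑ y ∈ G, ((b x y : ℂ) * (f x - f y) * conj (f x))).re
    = ∑ x ∈ G, ∑ y ∈ G, b x y * ((f x - f y) * conj (f x)).re := by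
  rw [Complex.re_sum]
  refine Finset.sum_congr rfl fun x _ => ?_
  rw [Complex.re_sum]
  refine Finset.sum_congr rfl fun y _ => ?_
  rw [mul_assoc, Complex.re_ofReal_mul]

lemma pointwise_id (bxy byx : ℝ) (u v : ℂ) :
    bxy * ((u - v) * conj u).re + byx * ((v - u) * conj v).re
    = ((bxy + byx)/2) * ‖u - v‖^2 + ((bxy - byx)/2) * (‖u‖^2 - ‖v‖^2) := by
  simp only [Complex.sq_norm, Complex.normSq_apply, Complex.mul_re,
    Complex.sub_re, Complex.sub_im, Complex.conj_re, Complex.conj_im]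
  ring

lemma sym_re {W : Type*} (G : Finset W) (b : W → W → ℝ) (f : W → ℂ) :
    (∑ x ∈ G, ∑ y ∈ G, ((b x y : ℂ) * (f x - f y) * conj (f x))).re
    = (1/2) * (∑ x ∈ G, ∑ y ∈ G, bsym b x y * ‖f x - f y‖^2)
      + (1/2) * ∑ x ∈ G, ‖f x‖^2 * (∑ y ∈ G, (b x y - b y x)) := by
  rw [re_sum2]
  have hsw : ∑ x ∈ G, ∑ y ∈ G, b x y * ((f x - f y) * conj (f x)).re
      = ∑ x ∈ G, ∑ y ∈ G, b y x * ((f y - f x) * conj (f y)).re := Finset.sum_comm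
  have h2 : 2 * (∑ x ∈ G, ∑ y ∈ G, b x y * ((f x - f y) * conj (f x)).re)
      = ∑ x ∈ G, ∑ y ∈ G, (bsym b x y * ‖f x - f y‖^2
          + ((b x y - b y x)/2) * (‖f x‖^2 - ‖f y‖^2)) := by
    rw [two_mul]; nth_rewrite 2 [hsw]
    rw [← Finset.sum_add_distrib]
    refine Finset.sum_congr rfl fun x _ => ?_
    rw [← Finset.sum_add_distrib]
    exact Finset.sum_congr rfl fun y _ => pointwise_id _ _ _ _
  have h3 : ∑ x ∈ G, ∑ y ∈ G, ((b x y - b y x)/2) * (‖f x‖^2 - ‖f y‖^2)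
      = ∑ x ∈ G, ‖f x‖^2 * (∑ y ∈ G, (b x y - b y x)) := by
    have e1 : ∀ x y : W, ((b x y - b y x)/2) * (‖f x‖^2 - ‖f y‖^2)
        = ((b x y - b y x)/2) * ‖f x‖^2 - ((b x y - b y x)/2) * ‖f y‖^2 := fun x y => by ring
    simp only [e1, Finset.sum_sub_distrib]
    have hsw2 : ∑ x ∈ G, ∑ y ∈ G, ((b x y - b y x)/2) * ‖f y‖^2
        = ∑ x ∈ G, ∑ y ∈ G, ((b y x - b x y)/2) * ‖f x‖^2 := Finset.sum_comm
    rw [hsw2, ← Finset.sum_sub_distrib]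
    refine Finset.sum_congr rfl fun x _ => ?_
    rw [mul_sub, Finset.mul_sum, Finset.mul_sum, ← Finset.sum_sub_distrib,
      ← Finset.sum_sub_distrib]
    exact Finset.sum_congr rfl fun y _ => by ring
  simp only [Finset.sum_add_distrib] at h2
  rw [h3] at h2
  linarith [h2]

lemma pair_ineq (c px py : ℝ) (hc : 0 ≤ c) (hx : 0 < px) (hy : 0 < py) (u v : ℂ) :
    c * ((px - py)/px * ‖u‖^2 + (py - px)/py * ‖v‖^2) ≤ c * ‖u - v‖^2 := by
  refine mul_le_mul_of_nonneg_left ?_ hc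
  have hre : (u * conj v).re ≤ ‖u‖ * ‖v‖ := by
    calc (u * conj v).re ≤ ‖u * conj v‖ := Complex.re_le_norm _
    _ = ‖u‖ * ‖v‖ := by rw [norm_mul, RCLike.norm_conj]
  have hn : ‖u - v‖^2 = ‖u‖^2 + ‖v‖^2 - 2 * (u * conj v).re := by
    simp only [Complex.sq_norm, Complex.normSq_apply, Complex.mul_re,
      Complex.sub_re, Complex.sub_im, Complex.conj_re, Complex.conj_im]
    ring
  rw [hn, div_mul_eq_mul_div, div_mul_eq_mul_div, div_add_div _ _ (ne_of_gt hx) (ne_of_gt hy),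
    div_le_iff₀ (by positivity)]
  have h1 : 2 * (u * conj v).re * (px * py) ≤ py^2 * ‖u‖^2 + px^2 * ‖v‖^2 + 0 := by
    nlinarith [sq_nonneg (py * ‖u‖ - px * ‖v‖), mul_pos hx hy, norm_nonneg u, norm_nonneg v,
      mul_le_mul_of_nonneg_left hre (le_of_lt (mul_pos hx hy))]
  nlinarith [h1, sq_nonneg (‖u‖ - ‖v‖)]

lemma gs_bound {W : Type*} (G : Finset W) (c : W → W → ℝ) (hc0 : ∀ x y, 0 ≤ c x y)
    (hcs : ∀ x y, c x y = c y x) (φ : W → ℝ) (hφ : ∀ x, 0 < φ x) (f : W → ℂ) :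
    ∑ x ∈ G, (‖f x‖^2 / φ x) * (∑ y ∈ G, c x y * (φ x - φ y))
    ≤ (1/2) * ∑ x ∈ G, ∑ y ∈ G, c x y * ‖f x - f y‖^2 := by
  have hL : ∑ x ∈ G, (‖f x‖^2 / φ x) * (∑ y ∈ G, c x y * (φ x - φ y))
      = ∑ x ∈ G, ∑ y ∈ G, c x y * ((φ x - φ y)/(φ x) * ‖f x‖^2) := by
    refine Finset.sum_congr rfl fun x _ => ?_
    rw [Finset.mul_sum]
    exact Finset.sum_congr rfl fun y _ => by
      field_simp
  have hsw : ∑ x ∈ G, ∑ y ∈ G, c x y * ((φ x - φ y)/(φ x) * ‖f x‖^2)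
      = ∑ x ∈ G, ∑ y ∈ G, c y x * ((φ y - φ x)/(φ y) * ‖f y‖^2) := Finset.sum_comm
  have key : ∀ x ∈ G, ∀ y ∈ G,
      c x y * ((φ x - φ y)/(φ x) * ‖f x‖^2) + c y x * ((φ y - φ x)/(φ y) * ‖f y‖^2)
      ≤ c x y * ‖f x - f y‖^2 := by
    intro x _ y _
    have := pair_ineq (c x y) (φ x) (φ y) (hc0 x y) (hφ x) (hφ y) (f x) (f y)
    rw [← hcs x y]
    nlinarith [this]
  have h2 : 2 * (∑ x ∈ G, ∑ y ∈ G, c x y * ((φ x - φ y)/(φ x) * ‖f x‖^2))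
      ≤ ∑ x ∈ G, ∑ y ∈ G, c x y * ‖f x - f y‖^2 := by
    rw [two_mul]; nth_rewrite 2 [hsw]
    rw [← Finset.sum_add_distrib]
    refine Finset.sum_le_sum fun x hx => ?_
    rw [← Finset.sum_add_distrib]
    exact Finset.sum_le_sum fun y hy => key x hx y hy
  rw [hL]; linarith

lemma main_ineq (a : ℝ) (ha : 3 ≤ a) :
    (1/6) * (Real.sqrt a)⁻¹ ≤
      (a - 1)^2 * ((Real.sqrt a)⁻¹ - (Real.sqrt (a - 1))⁻¹)
        + a^2 * ((Real.sqrt a)⁻¹ - (Real.sqrt (a + 1))⁻¹) := by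
  set s := Real.sqrt a with hs_def
  set q := Real.sqrt (a - 1) with hq_def
  set p := Real.sqrt (a + 1) with hp_def
  have hs2 : s^2 = a := Real.sq_sqrt (by linarith)
  have hq2 : q^2 = s^2 - 1 := by rw [hs2]; exact Real.sq_sqrt (by linarith)
  have hp2 : p^2 = s^2 + 1 := by rw [hs2]; exact Real.sq_sqrt (by linarith)
  have hs0 : 0 < s := Real.sqrt_pos.2 (by linarith)
  have hq0 : 0 < q := Real.sqrt_pos.2 (by linarith)
  have hp0 : 0 < p := Real.sqrt_pos.2 (by linarith)
  have hs3 : 3 ≤ s^2 := by rw [hs2]; exact ha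
  have hpq2 : (p*q)^2 = s^4 - 1 := by rw [mul_pow, hp2, hq2]; ring
  have hq_up : q * (2*s) ≤ 2*s^2 - 1 := by
    have h1 : q ≤ (2*s^2 - 1)/(2*s) := by
      have h2 : s^2 - 1 ≤ ((2*s^2 - 1)/(2*s))^2 := by
        rw [div_pow, le_div_iff₀ (by positivity)]
        nlinarith [hs3]
      calc q ≤ Real.sqrt (((2*s^2 - 1)/(2*s))^2) := by
            rw [hq_def, ← hs2]; exact Real.sqrt_le_sqrt h2
        _ = (2*s^2 - 1)/(2*s) := Real.sqrt_sq (div_nonneg (by nlinarith [hs3]) (by positivity))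
    rwa [le_div_iff₀ (by positivity)] at h1
  have hq_lo : 4*s^4 - 2*s^2 - 1 ≤ q * (4*s^3) := by
    have h1 : (4*s^4 - 2*s^2 - 1)/(4*s^3) ≤ q := by
      have h2 : ((4*s^4 - 2*s^2 - 1)/(4*s^3))^2 ≤ s^2 - 1 := by
        rw [div_pow, div_le_iff₀ (by positivity)]
        nlinarith [hs3, sq_nonneg s, mul_nonneg (sub_nonneg.2 hs3) (sq_nonneg s)]
      calc (4*s^4 - 2*s^2 - 1)/(4*s^3)
          = Real.sqrt (((4*s^4 - 2*s^2 - 1)/(4*s^3))^2) :=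
            (Real.sqrt_sq (div_nonneg (by nlinarith [hs3, sq_nonneg s, mul_nonneg (sub_nonneg.2 hs3) (sq_nonneg s)]) (by positivity))).symm
        _ ≤ q := by rw [hq_def, ← hs2]; exact Real.sqrt_le_sqrt h2
    rwa [div_le_iff₀ (by positivity)] at h1
  have hp_up : p * (2*s) ≤ 2*s^2 + 1 := by
    have h1 : p ≤ (2*s^2 + 1)/(2*s) := by
      have h2 : s^2 + 1 ≤ ((2*s^2 + 1)/(2*s))^2 := by
        rw [div_pow, le_div_iff₀ (by positivity)]
        nlinarith [hs3]
      calc p ≤ Real.sqrt (((2*s^2 + 1)/(2*s))^2) := by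
            rw [hp_def, ← hs2]; exact Real.sqrt_le_sqrt h2
        _ = (2*s^2 + 1)/(2*s) := Real.sqrt_sq (by positivity)
    rwa [le_div_iff₀ (by positivity)] at h1
  have hpq_up : (p*q) * (4*s^2) ≤ 4*s^4 - 1 := by
    nlinarith [mul_le_mul hp_up hq_up (by positivity) (by positivity)]
  have hu : (0:ℝ) ≤ s^2 - 3 := by linarith
  -- expanded core inequality
  have key2 : 0 ≤ (4*s^2) * ((6*s^4*(s^2-1) - 6*(s^2-1)^2*(s^2+1) - (s^4-1))
      + (q*s)*(6*s^4 - s^2 - 1) - (p*s)*((s^2-1)*(6*s^2-5)) - (p*q)*s^2) := by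
    have A1 : (4*s^4 - 2*s^2 - 1) * (6*s^4 - s^2 - 1) ≤ (q * (4*s^3)) * (6*s^4 - s^2 - 1) :=
      mul_le_mul_of_nonneg_right hq_lo (by nlinarith [hs3])
    have A2 : (p * (2*s)) * (2*s^2*((s^2-1)*(6*s^2-5))) ≤
        (2*s^2 + 1) * (2*s^2*((s^2-1)*(6*s^2-5))) :=
      mul_le_mul_of_nonneg_right hp_up (by nlinarith [hs3])
    have A3 : ((p*q) * (4*s^2)) * (s^2) ≤ (4*s^4 - 1) * (s^2) :=
      mul_le_mul_of_nonneg_right hpq_up (by positivity)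
    have huni : 0 ≤ 8*(s^2)^3 + 18*(s^2)^2 - 26*s^2 + 1 := by
      nlinarith [hu, mul_nonneg hu hu, mul_nonneg (mul_nonneg hu hu) hu]
    linarith [A1, A2, A3, huni]
  have Nexpand : (6*s^4*(q*(q+s)) - 6*(s^2-1)^2*(p*(p+s))) - p*q*((p+s)*(q+s))
      = (6*s^4*(s^2-1) - 6*(s^2-1)^2*(s^2+1) - (s^4-1))
        + (q*s)*(6*s^4 - s^2 - 1) - (p*s)*((s^2-1)*(6*s^2-5)) - (p*q)*s^2 := by
    linear_combination (6*s^4 - p*s)*hq2 + (-6*(s^2-1)^2 - q*s)*hp2 + (-1)*hpq2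
  have key : 0 ≤ (6*s^4*(q*(q+s)) - 6*(s^2-1)^2*(p*(p+s))) - p*q*((p+s)*(q+s)) := by
    rw [Nexpand]
    exact (mul_nonneg_iff_of_pos_left (show (0:ℝ) < 4*s^2 by positivity)).mp key2
  rw [← sub_nonneg]
  have hN : 6*(s^2-1)^2*(p*(q-s))*((p+s)*(q+s)) + 6*s^4*(q*(p-s))*((p+s)*(q+s))
        - p*q*((p+s)*(q+s))
      = (6*s^4*(q*(q+s)) - 6*(s^2-1)^2*(p*(p+s))) - p*q*((p+s)*(q+s)) := by
    linear_combination (6*(s^2-1)^2*p*(p+s))*hq2 + (6*s^4*q*(q+s))*hp2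
  have expand : (a - 1)^2 * (s⁻¹ - q⁻¹) + a^2 * (s⁻¹ - p⁻¹) - (1/6) * s⁻¹
      = (6*(s^2-1)^2*(p*(q-s))*((p+s)*(q+s)) + 6*s^4*(q*(p-s))*((p+s)*(q+s))
          - p*q*((p+s)*(q+s)))
        / ((6*s*p*q) * ((p+s)*(q+s))) := by
    rw [← hs2, eq_div_iff (by positivity)]
    field_simp
  rw [expand, hN]
  exact div_nonneg key (by positivity)

/-! ### The ground state and vertex inequalities -/

def psiF (m : ℕ) : ℝ := (Real.sqrt ((m:ℝ)+2))⁻¹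

def phiF (k : ℝ) : Vtx → ℝ
  | .o => (1 + 1/(11*(k+1))) * psiF 0
  | .X m => psiF m
  | .Y m => psiF m

lemma psiF_pos (m : ℕ) : 0 < psiF m := by
  unfold psiF
  have : (0:ℝ) < (m:ℝ) + 2 := by positivity
  positivity

lemma phiF_pos (hk : 0 ≤ k) (x : Vtx) : 0 < phiF k x := by
  have hK : (0:ℝ) < k + 1 := by linarith
  rcases x with _ | m | m <;> simp only [phiF] <;>
    first
      | exact psiF_pos _
      | (have := psiF_pos 0; positivity)

lemma ineq_o (k c : ℝ) (hk : 0 ≤ k) (hc : 0 ≤ c) :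
    (1 + 1/(11*(k+1))) * c / 6 ≤
      (k+1) * ((1 + 1/(11*(k+1))) * c - c) + (k+1) * ((1 + 1/(11*(k+1))) * c - c) := by
  have hK : (0:ℝ) < k + 1 := by linarith
  have e1 : (k+1) * ((1 + 1/(11*(k+1))) * c - c) = c/11 := by field_simp; ring
  rw [e1]
  have e2 : 1/(11*(k+1)) ≤ 1/11 := by
    rw [div_le_div_iff₀ (by linarith) (by norm_num)]; nlinarith
  nlinarith [mul_le_mul_of_nonneg_right e2 hc]

lemma sqrt23_key : 176 * Real.sqrt 3 ≤ 247 * Real.sqrt 2 := by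
  have hs2 : Real.sqrt 2 ^ 2 = 2 := Real.sq_sqrt (by norm_num)
  have hs3 : Real.sqrt 3 ^ 2 = 3 := Real.sq_sqrt (by norm_num)
  by_contra hcon
  push_neg at hcon
  have hlt := mul_self_lt_mul_self (by positivity) hcon
  nlinarith [hlt]

lemma inv_sqrt2 : (Real.sqrt 2)⁻¹ = Real.sqrt 2 / 2 := by
  have h := Real.mul_self_sqrt (by norm_num : (0:ℝ) ≤ 2)
  have h2 : (0:ℝ) < Real.sqrt 2 := Real.sqrt_pos.2 (by norm_num)
  field_simp
  rw [sq, h]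

lemma inv_sqrt3 : (Real.sqrt 3)⁻¹ = Real.sqrt 3 / 3 := by
  have h := Real.mul_self_sqrt (by norm_num : (0:ℝ) ≤ 3)
  have h2 : (0:ℝ) < Real.sqrt 3 := Real.sqrt_pos.2 (by norm_num)
  field_simp
  rw [sq, h]

lemma ineq_X0 (k : ℝ) (hk : 0 ≤ k) :
    (Real.sqrt 2)⁻¹/6 ≤ (k+1)*((Real.sqrt 2)⁻¹ - (1 + 1/(11*(k+1)))*(Real.sqrt 2)⁻¹)
      + 4*((Real.sqrt 2)⁻¹ - (Real.sqrt 3)⁻¹) := by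
  have hK : (0:ℝ) < k+1 := by linarith
  have h2 : (0:ℝ) < Real.sqrt 2 := Real.sqrt_pos.2 (by norm_num)
  have e1 : (k+1)*((Real.sqrt 2)⁻¹ - (1 + 1/(11*(k+1)))*(Real.sqrt 2)⁻¹)
      = -((Real.sqrt 2)⁻¹/11) := by field_simp; ring
  rw [e1, inv_sqrt2, inv_sqrt3]
  linarith [sqrt23_key]

/-! ### Kirchhoff -/

lemma kirch (x : Vtx) : ∑ y ∈ nbr x, (ebW k x y - ebW k y x) = 0 := by
  rcases x with _ | m | m <;> [skip; rcases m with _ | m; rcases m with _ | m]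
  · show ∑ y ∈ ({Vtx.X 0, Vtx.Y 0} : Finset Vtx), _ = 0
    rw [Finset.sum_pair (by simp)]
    simp only [ebW_oX, ebW_Xo, ebW_oY, ebW_Yo]
    norm_num
  · show ∑ y ∈ ({Vtx.o, Vtx.X 1, Vtx.Y 0} : Finset Vtx), _ = 0
    rw [Finset.sum_insert (by simp), Finset.sum_pair (by simp)]
    simp only [ebW_oX, ebW_Xo, ebW_XX, ebW_XY, ebW_YX]
    norm_num
  · show ∑ y ∈ ({Vtx.X m, Vtx.X (m+2), Vtx.Y (m+1)} : Finset Vtx), _ = 0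
    rw [Finset.sum_insert (by simp), Finset.sum_pair (by simp)]
    simp only [ebW_XX, ebW_XY, ebW_YX]
    split_ifs <;> (try (exfalso; omega)) <;> push_cast <;> ring
  · show ∑ y ∈ ({Vtx.o, Vtx.Y 1, Vtx.X 0} : Finset Vtx), _ = 0
    rw [Finset.sum_insert (by simp), Finset.sum_pair (by simp)]
    simp only [ebW_oY, ebW_Yo, ebW_YY, ebW_YX, ebW_XY]
    norm_num
  · show ∑ y ∈ ({Vtx.Y m, Vtx.Y (m+2), Vtx.X (m+1)} : Finset Vtx), _ = 0
    rw [Finset.sum_insert (by simp), Finset.sum_pair (by simp)]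
    simp only [ebW_YY, ebW_YX, ebW_XY]
    split_ifs <;> (try (exfalso; omega)) <;> push_cast <;> ring

/-! ### The key vertex inequality -/

lemma key_nbr (hk : 0 ≤ k) (x : Vtx) :
    phiF k x / 6 ≤ ∑ y ∈ nbr x, bsym (ebW k) x y * (phiF k x - phiF k y) := by
  have hK : (k:ℝ) + 1 ≠ 0 := by positivity
  have h47 : 4 * psiF 1 ≤ (247/66) * psiF 0 := by
    unfold psiF
    norm_num
    rw [inv_sqrt2, inv_sqrt3]
    linarith [sqrt23_key]
  rcases x with _ | m | m <;> [skip; rcases m with _ | m; rcases m with _ | m]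
  · show _ ≤ ∑ y ∈ ({Vtx.X 0, Vtx.Y 0} : Finset Vtx), _
    rw [Finset.sum_pair (by simp)]
    simp only [phiF, cW_oX, cW_oY]
    simp only [if_true]
    have e1 : (k+1) * ((1 + 1/(11*(k+1))) * psiF 0 - psiF 0) = psiF 0/11 := by
      field_simp; ring
    rw [e1]
    have hB : 1/(11*(k+1)) ≤ 1/11 := by
      rw [div_le_div_iff₀ (by positivity) (by norm_num)]
      nlinarith [hk]
    have hB0 : 0 ≤ 1/(11*(k+1)) := by positivity
    nlinarith [mul_le_mul_of_nonneg_right hB (psiF_pos 0).le, (psiF_pos 0).le,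
      mul_nonneg hB0 (psiF_pos 0).le]
  · show _ ≤ ∑ y ∈ ({Vtx.o, Vtx.X 1, Vtx.Y 0} : Finset Vtx), _
    rw [Finset.sum_insert (by simp), Finset.sum_pair (by simp)]
    simp only [phiF, cW_Xo, cW_XX, cW_XY, Nat.cast_zero]
    simp only [if_true]
    have e1 : (k+1) * (psiF 0 - (1 + 1/(11*(k+1))) * psiF 0) = -(psiF 0/11) := by
      field_simp; ring
    rw [e1]
    linarith [h47]
  · show _ ≤ ∑ y ∈ ({Vtx.X m, Vtx.X (m+2), Vtx.Y (m+1)} : Finset Vtx), _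
    rw [Finset.sum_insert (by simp), Finset.sum_pair (by simp)]
    simp only [cW_XX, cW_XY, phiF, psiF]
    split_ifs <;> (try (exfalso; omega))
    have H := main_ineq ((m:ℝ)+3) (by nlinarith [(Nat.cast_nonneg m : (0:ℝ) ≤ m)])
    push_cast
    push_cast at H
    ring_nf
    ring_nf at H
    linarith [H]
  · show _ ≤ ∑ y ∈ ({Vtx.o, Vtx.Y 1, Vtx.X 0} : Finset Vtx), _
    rw [Finset.sum_insert (by simp), Finset.sum_pair (by simp)]
    simp only [phiF, cW_Yo, cW_YY, cW_YX, Nat.cast_zero]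
    simp only [if_true]
    have e1 : (k+1) * (psiF 0 - (1 + 1/(11*(k+1))) * psiF 0) = -(psiF 0/11) := by
      field_simp; ring
    rw [e1]
    linarith [h47]
  · show _ ≤ ∑ y ∈ ({Vtx.Y m, Vtx.Y (m+2), Vtx.X (m+1)} : Finset Vtx), _
    rw [Finset.sum_insert (by simp), Finset.sum_pair (by simp)]
    simp only [cW_YY, cW_YX, phiF, psiF]
    split_ifs <;> (try (exfalso; omega))
    have H := main_ineq ((m:ℝ)+3) (by nlinarith [(Nat.cast_nonneg m : (0:ℝ) ≤ m)])
    push_cast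
    push_cast at H
    ring_nf
    ring_nf at H
    linarith [H]

/-! ### The boundary functional -/

def eB (k : ℝ) (U : Finset Vtx) (x : Vtx) : ℝ :=
  ∑' y, if y ∉ U then Real.sqrt (bsym (ebW k) x y) else 0

lemma eB_vanish (U : Finset Vtx) (x : Vtx) :
    ∀ y ∉ nbr x, (if y ∉ U then Real.sqrt (bsym (ebW k) x y) else 0) = 0 := by
  intro y hy
  rw [cW_zero k hy, Real.sqrt_zero, ite_self]

lemma eB_eq (U : Finset Vtx) (x : Vtx) :
    eB k U x = ∑ y ∈ nbr x, if y ∉ U then Real.sqrt (bsym (ebW k) x y) else 0 :=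
  tsum_eq_sum (eB_vanish k U x)

lemma eB_nonneg (U : Finset Vtx) (x : Vtx) : 0 ≤ eB k U x := by
  rw [eB_eq]
  refine Finset.sum_nonneg fun y _ => ?_
  split_ifs <;> first | exact Real.sqrt_nonneg _ | exact le_rfl

lemma eB_ge {U : Finset Vtx} {x y : Vtx} (hy : y ∈ nbr x) (hyU : y ∉ U) :
    Real.sqrt (bsym (ebW k) x y) ≤ eB k U x := by
  rw [eB_eq]
  have h := Finset.single_le_sum
    (f := fun z => if z ∉ U then Real.sqrt (bsym (ebW k) x z) else 0)
    (fun i _ => by split_ifs <;> first | exact Real.sqrt_nonneg _ | exact le_rfl) hy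
  simpa [hyU] using h

lemma nbr_succX (M : ℕ) : Vtx.X (M+1) ∈ nbr (Vtx.X M) := by
  cases M <;> simp [nbr]

lemma nbr_succY (M : ℕ) : Vtx.Y (M+1) ∈ nbr (Vtx.Y M) := by
  cases M <;> simp [nbr]

lemma sqrtc_X (M : ℕ) : Real.sqrt (bsym (ebW k) (.X M) (.X (M+1))) = (M:ℝ)+2 := by
  rw [cW_XX, if_pos rfl, Real.sqrt_sq (by positivity)]

lemma sqrtc_Y (M : ℕ) : Real.sqrt (bsym (ebW k) (.Y M) (.Y (M+1))) = (M:ℝ)+2 := by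
  rw [cW_YY, if_pos rfl, Real.sqrt_sq (by positivity)]

lemma sqrtc_oX (hk : 0 ≤ k) : 1 ≤ Real.sqrt (bsym (ebW k) .o (.X 0)) := by
  rw [cW_oX, if_pos rfl]
  calc (1:ℝ) = Real.sqrt 1 := Real.sqrt_one.symm
    _ ≤ _ := Real.sqrt_le_sqrt (by linarith)

lemma sqrtc_oY (hk : 0 ≤ k) : 1 ≤ Real.sqrt (bsym (ebW k) .o (.Y 0)) := by
  rw [cW_oY, if_pos rfl]
  calc (1:ℝ) = Real.sqrt 1 := Real.sqrt_one.symm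
    _ ≤ _ := Real.sqrt_le_sqrt (by linarith)

/-! ### Lower bound for the boundary of an arbitrary finite set -/

lemma E_lower (hk : 0 ≤ k) (U : Finset Vtx) (hU : U.Nonempty) :
    (U.card : ℝ) ≤ ∑ x ∈ U, eB k U x := by
  classical
  set UX := U.preimage Vtx.X (Function.Injective.injOn X_inj) with hUXdef
  set UY := U.preimage Vtx.Y (Function.Injective.injOn Y_inj) with hUYdef
  have hmemX : ∀ m, Vtx.X m ∈ U ↔ m ∈ UX := fun m => (Finset.mem_preimage).symm
  have hmemY : ∀ m, Vtx.Y m ∈ U ↔ m ∈ UY := fun m => (Finset.mem_preimage).symm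
  have hcard : U.card ≤ UX.card + UY.card + 1 := by
    have hsub : U ⊆ insert Vtx.o (UX.image Vtx.X ∪ UY.image Vtx.Y) := by
      intro v hv
      rcases v with _ | m | m
      · exact Finset.mem_insert_self _ _
      · exact Finset.mem_insert_of_mem
          (Finset.mem_union_left _ (Finset.mem_image_of_mem _ ((hmemX m).1 hv)))
      · exact Finset.mem_insert_of_mem
          (Finset.mem_union_right _ (Finset.mem_image_of_mem _ ((hmemY m).1 hv)))
    calc U.card ≤ _ := Finset.card_le_card hsub
      _ ≤ (UX.image Vtx.X ∪ UY.image Vtx.Y).card + 1 := Finset.card_insert_le _ _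
      _ ≤ UX.card + UY.card + 1 := by
          have h1 := Finset.card_union_le (UX.image Vtx.X) (UY.image Vtx.Y)
          have h2 := Finset.card_image_le (f := Vtx.X) (s := UX)
          have h3 := Finset.card_image_le (f := Vtx.Y) (s := UY)
          omega
  by_cases hX : UX.Nonempty
  · set M := UX.max' hX with hMdef
    have hXM : Vtx.X M ∈ U := (hmemX M).2 (UX.max'_mem hX)
    have hXM1 : Vtx.X (M+1) ∉ U := fun hmem => by
      have := UX.le_max' (M+1) ((hmemX _).1 hmem); omega
    have hbX : (M:ℝ)+2 ≤ eB k U (Vtx.X M) := by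
      rw [← sqrtc_X k M]; exact eB_ge k (nbr_succX M) hXM1
    have hcX : UX.card ≤ M+1 := by
      have hs : UX ⊆ Finset.range (M+1) :=
        fun m hm => Finset.mem_range.2 (by have := UX.le_max' m hm; omega)
      calc UX.card ≤ _ := Finset.card_le_card hs
        _ = M+1 := Finset.card_range _
    by_cases hY : UY.Nonempty
    · set MY := UY.max' hY with hMYdef
      have hYM : Vtx.Y MY ∈ U := (hmemY MY).2 (UY.max'_mem hY)
      have hYM1 : Vtx.Y (MY+1) ∉ U := fun hmem => by
        have := UY.le_max' (MY+1) ((hmemY _).1 hmem); omega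
      have hbY : (MY:ℝ)+2 ≤ eB k U (Vtx.Y MY) := by
        rw [← sqrtc_Y k MY]; exact eB_ge k (nbr_succY MY) hYM1
      have hcY : UY.card ≤ MY+1 := by
        have hs : UY ⊆ Finset.range (MY+1) :=
          fun m hm => Finset.mem_range.2 (by have := UY.le_max' m hm; omega)
        calc UY.card ≤ _ := Finset.card_le_card hs
          _ = MY+1 := Finset.card_range _
      have hsum : eB k U (Vtx.X M) + eB k U (Vtx.Y MY) ≤ ∑ x ∈ U, eB k U x := by
        have hsub : ({Vtx.X M, Vtx.Y MY} : Finset Vtx) ⊆ U := by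
          intro v hv
          rcases Finset.mem_insert.1 hv with rfl | hv
          · exact hXM
          · rw [Finset.mem_singleton.1 hv]; exact hYM
        calc eB k U (Vtx.X M) + eB k U (Vtx.Y MY)
            = ∑ x ∈ ({Vtx.X M, Vtx.Y MY} : Finset Vtx), eB k U x :=
              (Finset.sum_pair (by simp)).symm
          _ ≤ _ := Finset.sum_le_sum_of_subset_of_nonneg hsub
              (fun x _ _ => eB_nonneg k U x)
      have c1 : (U.card : ℝ) ≤ (M:ℝ) + (MY:ℝ) + 3 := by
        have : U.card ≤ M + MY + 3 := by omega
        exact_mod_cast this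
      linarith [hsum, hbX, hbY, c1]
    · have hY0 : Vtx.Y 0 ∉ U := fun h => hY ⟨0, (hmemY 0).1 h⟩
      have hUYe : UY.card = 0 := by
        rw [Finset.card_eq_zero]; exact Finset.not_nonempty_iff_eq_empty.1 hY
      by_cases ho : Vtx.o ∈ U
      · have hbo : (1:ℝ) ≤ eB k U Vtx.o :=
          le_trans (sqrtc_oY k hk) (eB_ge k (by simp [nbr]) hY0)
        have hsum : eB k U (Vtx.X M) + eB k U Vtx.o ≤ ∑ x ∈ U, eB k U x := by
          have hsub : ({Vtx.X M, Vtx.o} : Finset Vtx) ⊆ U := by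
            intro v hv
            rcases Finset.mem_insert.1 hv with rfl | hv
            · exact hXM
            · rw [Finset.mem_singleton.1 hv]; exact ho
          calc eB k U (Vtx.X M) + eB k U Vtx.o
              = ∑ x ∈ ({Vtx.X M, Vtx.o} : Finset Vtx), eB k U x :=
                (Finset.sum_pair (by simp)).symm
            _ ≤ _ := Finset.sum_le_sum_of_subset_of_nonneg hsub
                (fun x _ _ => eB_nonneg k U x)
        have c1 : (U.card : ℝ) ≤ (M:ℝ) + 2 + 1 := by
          have : U.card ≤ M + 3 := by omega
          push_cast
          exact_mod_cast this
        linarith [hsum, hbX, hbo]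
      · have hsub2 : U ⊆ UX.image Vtx.X := by
          intro v hv
          rcases v with _ | m | m
          · exact absurd hv ho
          · exact Finset.mem_image_of_mem _ ((hmemX m).1 hv)
          · exact absurd ⟨m, (hmemY m).1 hv⟩ hY
        have hc2 : U.card ≤ M + 1 := by
          have h1 := Finset.card_le_card hsub2
          have h2 := Finset.card_image_le (f := Vtx.X) (s := UX)
          omega
        have hsum : eB k U (Vtx.X M) ≤ ∑ x ∈ U, eB k U x :=
          Finset.single_le_sum (fun x _ => eB_nonneg k U x) hXM
        have c1 : (U.card : ℝ) ≤ (M:ℝ) + 1 := by exact_mod_cast hc2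
        linarith [hsum, hbX]
  · by_cases hY : UY.Nonempty
    · set M := UY.max' hY with hMdef
      have hYM : Vtx.Y M ∈ U := (hmemY M).2 (UY.max'_mem hY)
      have hYM1 : Vtx.Y (M+1) ∉ U := fun hmem => by
        have := UY.le_max' (M+1) ((hmemY _).1 hmem); omega
      have hbY : (M:ℝ)+2 ≤ eB k U (Vtx.Y M) := by
        rw [← sqrtc_Y k M]; exact eB_ge k (nbr_succY M) hYM1
      have hcY : UY.card ≤ M+1 := by
        have hs : UY ⊆ Finset.range (M+1) :=
          fun m hm => Finset.mem_range.2 (by have := UY.le_max' m hm; omega)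
        calc UY.card ≤ _ := Finset.card_le_card hs
          _ = M+1 := Finset.card_range _
      have hX0 : Vtx.X 0 ∉ U := fun h => hX ⟨0, (hmemX 0).1 h⟩
      have hUXe : UX.card = 0 := by
        rw [Finset.card_eq_zero]; exact Finset.not_nonempty_iff_eq_empty.1 hX
      by_cases ho : Vtx.o ∈ U
      · have hbo : (1:ℝ) ≤ eB k U Vtx.o :=
          le_trans (sqrtc_oX k hk) (eB_ge k (by simp [nbr]) hX0)
        have hsum : eB k U (Vtx.Y M) + eB k U Vtx.o ≤ ∑ x ∈ U, eB k U x := by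
          have hsub : ({Vtx.Y M, Vtx.o} : Finset Vtx) ⊆ U := by
            intro v hv
            rcases Finset.mem_insert.1 hv with rfl | hv
            · exact hYM
            · rw [Finset.mem_singleton.1 hv]; exact ho
          calc eB k U (Vtx.Y M) + eB k U Vtx.o
              = ∑ x ∈ ({Vtx.Y M, Vtx.o} : Finset Vtx), eB k U x :=
                (Finset.sum_pair (by simp)).symm
            _ ≤ _ := Finset.sum_le_sum_of_subset_of_nonneg hsub
                (fun x _ _ => eB_nonneg k U x)
        have c1 : (U.card : ℝ) ≤ (M:ℝ) + 2 + 1 := by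
          have : U.card ≤ M + 3 := by omega
          push_cast
          exact_mod_cast this
        linarith [hsum, hbY, hbo]
      · have hsub2 : U ⊆ UY.image Vtx.Y := by
          intro v hv
          rcases v with _ | m | m
          · exact absurd hv ho
          · exact absurd ⟨m, (hmemX m).1 hv⟩ hX
          · exact Finset.mem_image_of_mem _ ((hmemY m).1 hv)
        have hc2 : U.card ≤ M + 1 := by
          have h1 := Finset.card_le_card hsub2
          have h2 := Finset.card_image_le (f := Vtx.Y) (s := UY)
          omega
        have hsum : eB k U (Vtx.Y M) ≤ ∑ x ∈ U, eB k U x :=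
          Finset.single_le_sum (fun x _ => eB_nonneg k U x) hYM
        have c1 : (U.card : ℝ) ≤ (M:ℝ) + 1 := by exact_mod_cast hc2
        linarith [hsum, hbY]
    · have hUo : U = {Vtx.o} := by
        obtain ⟨v, hv⟩ := hU
        have hvo : v = Vtx.o := by
          rcases v with _ | m | m
          · rfl
          · exact absurd ⟨m, (hmemX m).1 hv⟩ hX
          · exact absurd ⟨m, (hmemY m).1 hv⟩ hY
        subst hvo
        refine Finset.eq_singleton_iff_unique_mem.2 ⟨hv, fun w hw => ?_⟩
        rcases w with _ | m | m
        · rfl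
        · exact absurd ⟨m, (hmemX m).1 hw⟩ hX
        · exact absurd ⟨m, (hmemY m).1 hw⟩ hY
      subst hUo
      have hX0 : Vtx.X 0 ∉ ({Vtx.o} : Finset Vtx) := by simp
      have hbo : (1:ℝ) ≤ eB k {Vtx.o} Vtx.o :=
        le_trans (sqrtc_oX k hk) (eB_ge k (by simp [nbr]) hX0)
      simp only [Finset.sum_singleton, Finset.card_singleton]
      exact_mod_cast hbo

/-! ### The boundary of balls, and the Cheeger constant -/

lemma eB_inner (n : ℕ) {x : Vtx} (hx : x ∈ ballF n) : eB k (ballF (n+1)) x = 0 := by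
  rw [eB_eq]
  refine Finset.sum_eq_zero fun y hy => ?_
  rw [if_neg (not_not_intro (nbr_subset_ballF hx hy))]

lemma eB_bdryX (n : ℕ) : eB k (ballF (n+1)) (Vtx.X n) = (n:ℝ)+2 := by
  rw [eB_eq]
  rcases n with _ | m
  · show ∑ y ∈ ({Vtx.o, Vtx.X 1, Vtx.Y 0} : Finset Vtx), _ = _
    rw [Finset.sum_insert (by simp), Finset.sum_pair (by simp)]
    rw [if_neg (by simp), if_pos (by simp), if_neg (by simp)]
    have h := sqrtc_X k 0
    norm_num at h ⊢
    rw [h]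
  · show ∑ y ∈ ({Vtx.X m, Vtx.X (m+2), Vtx.Y (m+1)} : Finset Vtx), _ = _
    rw [Finset.sum_insert (by simp), Finset.sum_pair (by simp)]
    rw [if_neg (by simp), if_pos (by simp), if_neg (by simp)]
    have h := sqrtc_X k (m+1)
    push_cast at h ⊢
    rw [show m + 1 + 1 = m + 2 from rfl] at h
    rw [h]
    ring

lemma eB_bdryY (n : ℕ) : eB k (ballF (n+1)) (Vtx.Y n) = (n:ℝ)+2 := by
  rw [eB_eq]
  rcases n with _ | m
  · show ∑ y ∈ ({Vtx.o, Vtx.Y 1, Vtx.X 0} : Finset Vtx), _ = _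
    rw [Finset.sum_insert (by simp), Finset.sum_pair (by simp)]
    rw [if_neg (by simp), if_pos (by simp), if_neg (by simp)]
    have h := sqrtc_Y k 0
    norm_num at h ⊢
    rw [h]
  · show ∑ y ∈ ({Vtx.Y m, Vtx.Y (m+2), Vtx.X (m+1)} : Finset Vtx), _ = _
    rw [Finset.sum_insert (by simp), Finset.sum_pair (by simp)]
    rw [if_neg (by simp), if_pos (by simp), if_neg (by simp)]
    have h := sqrtc_Y k (m+1)
    push_cast at h ⊢
    rw [show m + 1 + 1 = m + 2 from rfl] at h
    rw [h]
    ring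

lemma E_upper (n : ℕ) :
    ∑ x ∈ ballF (n+1), eB k (ballF (n+1)) x = 2*((n:ℝ)+2) := by
  have hsub : ({Vtx.X n, Vtx.Y n} : Finset Vtx) ⊆ ballF (n+1) := by
    intro v hv
    rcases Finset.mem_insert.1 hv with rfl | hv
    · simp
    · rw [Finset.mem_singleton.1 hv]; simp
  rw [← Finset.sum_subset hsub]
  · rw [Finset.sum_pair (by simp), eB_bdryX, eB_bdryY]; ring
  · intro x hx hxn
    refine eB_inner k n ?_
    rcases x with _ | m | m
    · simp
    · simp only [X_mem_ballF] at hx ⊢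
      have : m ≠ n := fun h => hxn (by simp [h])
      omega
    · simp only [Y_mem_ballF] at hx ⊢
      have : m ≠ n := fun h => hxn (by simp [h])
      omega

open Classical in
lemma cheeger_bddBelow_gen {W : Type*} (c : W → W → ℝ) :
    BddBelow (Set.range fun U : {U : Finset W // U.Nonempty} =>
      (∑ x ∈ U.1, ∑' y : W, if y ∉ U.1 then Real.sqrt (c x y) else 0)
        / (U.1.card : ℝ)) := by
  refine ⟨0, fun r hr => ?_⟩
  obtain ⟨U, rfl⟩ := hr
  refine div_nonneg (Finset.sum_nonneg fun x _ => tsum_nonneg fun y => ?_) (by positivity)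
  split_ifs <;> first | exact Real.sqrt_nonneg _ | exact le_rfl

lemma cheeger_ge (hk : 0 ≤ k) : 1 ≤ cheeger (bsym (ebW k)) := by
  unfold cheeger
  have hne : Nonempty {U : Finset Vtx // U.Nonempty} :=
    ⟨⟨{Vtx.o}, Finset.singleton_nonempty _⟩⟩
  refine le_ciInf fun U => ?_
  have hpos : (0:ℝ) < U.1.card := by exact_mod_cast Finset.card_pos.2 U.2
  rw [le_div_iff₀ hpos, one_mul]
  have h3 := E_lower k hk U.1 U.2
  convert h3 using 2 with x hx
  congr!
  unfold eB
  congr!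

lemma cheeger_le (hk : 0 ≤ k) : cheeger (bsym (ebW k)) ≤ 1 := by
  refine le_one_of_le_seq _ fun n => ?_
  have h1 := ciInf_le (cheeger_bddBelow_gen (bsym (ebW k)))
    ⟨ballF (n+1), ballF_nonempty (n+1)⟩
  have h2 : cheeger (bsym (ebW k)) ≤
      (∑ x ∈ ballF (n+1), eB k (ballF (n+1)) x) / (((ballF (n+1)).card : ℕ) : ℝ) := by
    refine le_trans (le_of_eq ?_) (h1.trans (le_of_eq ?_))
    · unfold cheeger
      congr!
    · simp only [eB]
      congr!
  rw [E_upper, card_ballF] at h2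
  refine h2.trans ?_
  push_cast
  rw [div_le_div_iff₀ (by positivity) (by positivity)]
  nlinarith [(Nat.cast_nonneg n : (0:ℝ) ≤ n)]

lemma part2 (hk : 0 ≤ k) : cheeger (bsym (ebW k)) = 1 :=
  le_antisymm (cheeger_le k hk) (cheeger_ge k hk)

/-! ### Part 3: the spectral gap estimate -/

lemma part3 (hk : 0 ≤ k) (f : Vtx → ℂ) (hf : FinSupp f)
    (hnorm : l2normSq (fun _ => 1) f = 1) :
    (1:ℝ)/6 ≤ (gip (fun _ => 1) (lapOp (fun _ => 1) (ebW k) f) f).re := by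
  classical
  obtain ⟨N, hsupp⟩ : ∃ N : ℕ, ∀ x : Vtx, f x ≠ 0 → x ∈ ballF N := by
    let idx : Vtx → ℕ := fun v => match v with | .o => 0 | .X m => m+1 | .Y m => m+1
    refine ⟨(hf.toFinset.sup idx) + 1, fun x hx => ?_⟩
    have hmem : x ∈ hf.toFinset := by
      exact (Set.Finite.mem_toFinset (hs := hf)).2 hx
    have hle : idx x ≤ hf.toFinset.sup idx := Finset.le_sup hmem
    rcases x with _ | m | m
    · simp
    · simp only [X_mem_ballF]
      have h' : m + 1 ≤ hf.toFinset.sup idx := hle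
      omega
    · simp only [Y_mem_ballF]
      have h' : m + 1 ≤ hf.toFinset.sup idx := hle
      omega
  have hsubball : ballF N ⊆ ballF (N+1) := by
    intro v hv
    rcases v with _ | m | m <;> simp_all <;> omega
  set G := ballF (N+1) with hGdef
  have hsuppG : ∀ x : Vtx, f x ≠ 0 → x ∈ G := fun x hx => hsubball (hsupp x hx)
  have hnormG : ∑ x ∈ G, ‖f x‖^2 = 1 := by
    have hv : ∀ x ∉ G, (fun _ => (1:ℝ)) x * ‖f x‖^2 = 0 := by
      intro x hx
      have hz : f x = 0 := by by_contra h; exact hx (hsuppG x h)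
      simp [hz]
    have ht := tsum_eq_sum (L := SummationFilter.unconditional _) (s := G) hv
    unfold l2normSq at hnorm
    rw [ht] at hnorm
    simpa using hnorm
  have h1 : gip (fun _ => 1) (lapOp (fun _ => 1) (ebW k) f) f
      = ∑ x ∈ G, lapOp (fun _ => 1) (ebW k) f x * conj (f x) := by
    unfold gip
    have hv : ∀ x ∉ G, (((fun _ => (1:ℝ)) x : ℝ) : ℂ) * lapOp (fun _ => 1) (ebW k) f x
        * conj (f x) = 0 := by
      intro x hx
      have hz : f x = 0 := by by_contra h; exact hx (hsuppG x h)
      simp [hz]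
    rw [tsum_eq_sum (L := SummationFilter.unconditional _) (s := G) hv]
    exact Finset.sum_congr rfl fun x _ => by push_cast; ring
  have h2 : ∀ x ∈ ballF N, lapOp (fun _ => 1) (ebW k) f x
      = ∑ y ∈ G, (ebW k x y : ℂ) * (f x - f y) := by
    intro x hx
    unfold lapOp
    have hv : ∀ y ∉ G, (ebW k x y : ℂ) * (f x - f y) = 0 := by
      intro y hy
      have hb : ebW k x y = 0 :=
        (ebW_eq_zero k (fun hmem => hy (nbr_subset_ballF hx hmem))).1
      rw [hb]; simp
    rw [tsum_eq_sum (L := SummationFilter.unconditional _) (s := G) hv]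
    norm_num
  have h3 : gip (fun _ => 1) (lapOp (fun _ => 1) (ebW k) f) f
      = ∑ x ∈ G, (∑ y ∈ G, (ebW k x y : ℂ) * (f x - f y)) * conj (f x) := by
    rw [h1]
    refine Finset.sum_congr rfl fun x hxG => ?_
    by_cases hfx : f x = 0
    · simp [hfx]
    · rw [h2 x (hsupp x hfx)]
  have h4 : (gip (fun _ => 1) (lapOp (fun _ => 1) (ebW k) f) f).re
      = (1/2) * (∑ x ∈ G, ∑ y ∈ G, bsym (ebW k) x y * ‖f x - f y‖^2) := by
    rw [h3]
    have e : ∀ x, (∑ y ∈ G, (ebW k x y : ℂ) * (f x - f y)) * conj (f x)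
        = ∑ y ∈ G, (ebW k x y : ℂ) * (f x - f y) * conj (f x) := fun x =>
      Finset.sum_mul _ _ _
    simp only [e]
    rw [sym_re G (ebW k) f]
    have hzero : ∑ x ∈ G, ‖f x‖^2 * (∑ y ∈ G, (ebW k x y - ebW k y x)) = 0 := by
      refine Finset.sum_eq_zero fun x hxG => ?_
      by_cases hfx : f x = 0
      · simp [hfx]
      · have hxN : x ∈ ballF N := hsupp x hfx
        have hker : ∑ y ∈ G, (ebW k x y - ebW k y x) = 0 := by
          rw [← Finset.sum_subset (nbr_subset_ballF hxN) (fun y hyG hynbr => by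
            obtain ⟨ha, hb⟩ := ebW_eq_zero k hynbr
            rw [ha, hb, sub_zero])]
          exact kirch k x
        rw [hker, mul_zero]
    rw [hzero, mul_zero, add_zero]
  have h6 := gs_bound G (bsym (ebW k)) (cW_nonneg k hk) (cW_symm k) (phiF k)
      (phiF_pos k hk) f
  have h7 : ∑ x ∈ G, (1/6) * ‖f x‖^2
      ≤ ∑ x ∈ G, (‖f x‖^2 / phiF k x)
          * (∑ y ∈ G, bsym (ebW k) x y * (phiF k x - phiF k y)) := by
    refine Finset.sum_le_sum fun x hxG => ?_
    by_cases hfx : f x = 0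
    · simp [hfx]
    · have hxN : x ∈ ballF N := hsupp x hfx
      have hsum : ∑ y ∈ G, bsym (ebW k) x y * (phiF k x - phiF k y)
          = ∑ y ∈ nbr x, bsym (ebW k) x y * (phiF k x - phiF k y) :=
        (Finset.sum_subset (nbr_subset_ballF hxN) (fun y hyG hynbr => by
          rw [cW_zero k hynbr, zero_mul])).symm
      rw [hsum]
      have hkey := key_nbr k hk x
      have hφ := phiF_pos k hk x
      calc (1/6) * ‖f x‖^2 = (‖f x‖^2 / phiF k x) * (phiF k x / 6) := by
            field_simp
        _ ≤ _ := mul_le_mul_of_nonneg_left hkey (by positivity)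
  have h8 : ∑ x ∈ G, (1/6) * ‖f x‖^2 = 1/6 := by
    rw [← Finset.mul_sum, hnormG, mul_one]
  rw [h4]
  linarith [h6, h7, h8.symm.le, h8.le]
end Stmt18Aux

/-- for the explicit two-ray graph of Example 5 with `m ≡ 1`, the Cheeger
constant equals `1 = inf_n 2(n+1)/(2n+1)`, and consequently `Re⟨Δf,f⟩ ≥ 1/6` for every unit
vector `f ∈ C_c(V)` (the lower bound `h²/(2M)` with degree bound `M = 3`). -/
theorem stmt18 (k : ℝ) (hk : 0 ≤ k) :
    (⨅ n : ℕ, 2 * ((n : ℝ) + 1) / (2 * (n : ℝ) + 1)) = 1 ∧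
    cheeger (bsym (ebW k)) = 1 ∧
    ∀ f : Vtx → ℂ, FinSupp f → l2normSq (fun _ => 1) f = 1 →
      (1 : ℝ) / 6 ≤ (gip (fun _ => 1) (lapOp (fun _ => 1) (ebW k) f) f).re :=
  ⟨Stmt18Aux.part1, Stmt18Aux.part2 k hk, fun f hf hn => Stmt18Aux.part3 k hk f hf hn⟩
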